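/- For every natural number n, Σ_{k=0}^{b(n)} a(k) = b(n)² + b(n) + n + 1, where a and b enumerate the odious and evil numbers in increasing order. -/

import Mathlib

/-- Sum of base-`d` digits of `n`. -/
def sdig (d n : ℕ) : ℕ := (Nat.digits d n).sum

/-- `t_d(n)`: base-`d` digit sum of `n`, reduced mod `d`. -/
def td (d n : ℕ) : ℕ := sdig d n % d

/-- `a_{j,d}(n)`: n-th natural (0-indexed, increasing) with base-`d` digit sum ≡ j mod d. -/
noncomputable def agen (d j n : ℕ) : ℕ := Nat.nth (fun k => sdig d k % d = j) n

/-- n-th odious number (binary digit sum odd), 0-indexed increasing. -/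
noncomputable def odious (n : ℕ) : ℕ := Nat.nth (fun k => (Nat.digits 2 k).sum % 2 = 1) n

/-- n-th evil number (binary digit sum even), 0-indexed increasing. -/
noncomputable def evil (n : ℕ) : ℕ := Nat.nth (fun k => (Nat.digits 2 k).sum % 2 = 0) n

/-- Thue–Morse sequence: parity of the binary digit sum. -/
def tm (n : ℕ) : ℕ := (Nat.digits 2 n).sum % 2

/-!
Each pair `{2k, 2k+1}` contains exactly one odious and one evil number, so the `k`-th odious
number is the odious member of the `k`-th pair, `a(k) = 2k + 1 - t(k)` with `t` the Thue–Morse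
sequence. Hence `∑_{k ≤ m} a(k) = (m+1)² - ∑_{k ≤ m} t(k)`, and `∑_{k ≤ m} t(k)` counts
the odious numbers up to `m`, which for `m = b(n)` is `m + 1 - (n + 1)`.
-/

theorem Finset.sum_range_two_mul_add_one (N : ℕ) : ∑ k ∈ Finset.range N, (2 * k + 1) = N ^ 2 := by
  induction N with
  | zero => rfl
  | succ N ih => rw [Finset.sum_range_succ, ih]; ring

lemma tm_lt_two (n : ℕ) : tm n < 2 := Nat.mod_lt _ two_pos

lemma tm_two_mul_add (k : ℕ) {r : ℕ} (hr : r < 2) : tm (2 * k + r) = (tm k + r) % 2 := by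
  rcases Nat.eq_zero_or_pos (r + k) with h | h
  · obtain ⟨rfl, rfl⟩ : r = 0 ∧ k = 0 := by omega
    rfl
  · rw [tm, add_comm, Nat.digits_add 2 one_lt_two r k hr (by omega), List.sum_cons, tm]
    omega

lemma tm_two_mul (k : ℕ) : tm (2 * k) = tm k := by
  simpa [tm] using tm_two_mul_add k two_pos

lemma tm_two_mul_add_mod_two (k : ℕ) {j : ℕ} (hj : j < 2) :
    tm (2 * k + (j + tm k) % 2) = j := by
  rw [tm_two_mul_add k (Nat.mod_lt _ two_pos)]
  have := tm_lt_two k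
  interval_cases j <;> interval_cases tm k <;> rfl

lemma count_tm_eq_two_mul (j k : ℕ) (hj : j < 2) : Nat.count (tm · = j) (2 * k) = k := by
  induction k with
  | zero => rfl
  | succ k ih =>
    have := tm_lt_two k
    rw [show 2 * (k + 1) = 2 * k + 1 + 1 by ring, Nat.count_succ, Nat.count_succ, ih,
      tm_two_mul, tm_two_mul_add k one_lt_two]
    interval_cases j <;> interval_cases tm k <;> simp

lemma nth_tm_eq (j k : ℕ) (hj : j < 2) : Nat.nth (tm · = j) k = 2 * k + (j + tm k) % 2 := by
  have hmem := tm_two_mul_add_mod_two k hj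
  have hcount : Nat.count (tm · = j) (2 * k + (j + tm k) % 2) = k := by
    rcases Nat.mod_two_eq_zero_or_one (j + tm k) with h | h <;> rw [h] at hmem ⊢
    · exact count_tm_eq_two_mul j k hj
    · have hne : tm (2 * k) ≠ j := by rw [tm_two_mul]; omega
      simp [Nat.count_succ, count_tm_eq_two_mul j k hj, hne]
  simpa [hcount] using Nat.nth_count (p := (tm · = j)) hmem

lemma setOf_tm_eq_infinite {j : ℕ} (hj : j < 2) : {k | tm k = j}.Infinite :=
  Set.infinite_of_forall_exists_gt fun a =>
    ⟨_, tm_two_mul_add_mod_two (a + 1) hj, by omega⟩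

lemma odious_add_tm (k : ℕ) : odious k + tm k = 2 * k + 1 := by
  have h := nth_tm_eq 1 k one_lt_two
  have := tm_lt_two k
  change Nat.nth (tm · = 1) k + tm k = _
  interval_cases tm k <;> simp_all

lemma count_evil_succ (n : ℕ) : Nat.count (tm · = 0) (evil n + 1) = n + 1 :=
  Nat.count_nth_succ_of_infinite (setOf_tm_eq_infinite two_pos) n

lemma sum_tm_add_count_tm_eq_zero (N : ℕ) :
    ∑ k ∈ Finset.range N, tm k + Nat.count (tm · = 0) N = N := by
  induction N with
  | zero => rfl
  | succ N ih =>
    rw [Finset.sum_range_succ, Nat.count_succ]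
    have := tm_lt_two N
    interval_cases tm N <;> simp <;> omega

theorem stmt11 (n : ℕ) :
    ∑ k ∈ Finset.range (evil n + 1), odious k = (evil n) ^ 2 + evil n + n + 1 := by
  set m := evil n
  have hsum : ∑ k ∈ Finset.range (m + 1), odious k + ∑ k ∈ Finset.range (m + 1), tm k
      = (m + 1) ^ 2 := by
    simp only [← Finset.sum_add_distrib, odious_add_tm, Finset.sum_range_two_mul_add_one]
  have hcount := sum_tm_add_count_tm_eq_zero (m + 1)
  rw [count_evil_succ] at hcount
  linarith
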